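/- (Theorem 3.2, second part) Let (x_0, ξ_0) ∈ ℝⁿ × ℝⁿ, and suppose that for each k ≥ 1 the pair (x_k, ξ_k) is a global minimizer of the surrogate φ^{ξ_{k−1}} over ℝⁿ × ℝⁿ. Then the sequence (x_k, ξ_k) converges to a limit (x*, ξ*) ∈ ℝⁿ × ℝⁿ which is a stationary point of φ, i.e., the Fréchet derivative of φ at (x*, ξ*) is zero. -/

import Mathlib

open scoped BigOperators

/-- Weighted squared norm `‖v‖²_M = vᵀ M v`. -/
noncomputable def wnormSq {m : ℕ} (M : Matrix (Fin m) (Fin m) ℝ) (v : Fin m → ℝ) : ℝ :=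
  dotProduct v (M.mulVec v)

/-- The smoothed objective
`φ(x, ξ) = ‖A Q x + A ξ − b‖²_{R⁻¹} + λx² ‖x‖²_Q + λξ² Σᵢ √(ξᵢ² + τ²)`. -/
noncomputable def phi {m n : ℕ} (A : Matrix (Fin m) (Fin n) ℝ) (b : Fin m → ℝ)
    (R : Matrix (Fin m) (Fin m) ℝ) (Q : Matrix (Fin n) (Fin n) ℝ)
    (lx lξ τ : ℝ) (x ξ : Fin n → ℝ) : ℝ :=
  wnormSq R⁻¹ (A.mulVec (Q.mulVec x) + A.mulVec ξ - b) + lx ^ 2 * wnormSq Q x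
    + lξ ^ 2 * ∑ i, Real.sqrt ((ξ i) ^ 2 + τ ^ 2)

/-- The quadratic surrogate
`φ^ζ(x, ξ) = ‖A Q x + A ξ − b‖²_{R⁻¹} + λx² ‖x‖²_Q
  + λξ² Σᵢ [ (ξᵢ² + τ²)/(2 √(ζᵢ² + τ²)) + √(ζᵢ² + τ²)/2 ]`. -/
noncomputable def phiSur {m n : ℕ} (A : Matrix (Fin m) (Fin n) ℝ) (b : Fin m → ℝ)
    (R : Matrix (Fin m) (Fin m) ℝ) (Q : Matrix (Fin n) (Fin n) ℝ)
    (lx lξ τ : ℝ) (ζ x ξ : Fin n → ℝ) : ℝ :=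
  wnormSq R⁻¹ (A.mulVec (Q.mulVec x) + A.mulVec ξ - b) + lx ^ 2 * wnormSq Q x
    + lξ ^ 2 * ∑ i, (((ξ i) ^ 2 + τ ^ 2) / (2 * Real.sqrt ((ζ i) ^ 2 + τ ^ 2))
        + Real.sqrt ((ζ i) ^ 2 + τ ^ 2) / 2)


open scoped BigOperators

lemma s_pos {τ t : ℝ} (hτ : 0 < τ) : 0 < Real.sqrt (t^2 + τ^2) :=
  Real.sqrt_pos.2 (by positivity)

lemma sq_s {τ t : ℝ} : (Real.sqrt (t^2+τ^2))^2 = t^2+τ^2 := Real.sq_sqrt (by positivity)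

lemma abs_le_s {τ t : ℝ} : |t| ≤ Real.sqrt (t^2 + τ^2) := by
  rw [← Real.sqrt_sq_eq_abs]
  exact Real.sqrt_le_sqrt (by nlinarith [sq_nonneg τ])

lemma tau_le_s {τ t : ℝ} (hτ : 0 < τ) : τ ≤ Real.sqrt (t^2 + τ^2) := by
  have h1 : Real.sqrt (τ^2) ≤ Real.sqrt (t^2 + τ^2) := Real.sqrt_le_sqrt (by nlinarith [sq_nonneg t])
  rwa [Real.sqrt_sq hτ.le] at h1

lemma gap_id {p s : ℝ} (hs : s ≠ 0) : p^2/(2*s) + s/2 - p = (p - s)^2/(2*s) := by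
  field_simp; ring

lemma key_ps {τ a c : ℝ} (hτ : 0 < τ) :
    a*c + τ^2 ≤ Real.sqrt (a^2+τ^2) * Real.sqrt (c^2+τ^2) := by
  have hp := s_pos (t := a) hτ
  have hq := s_pos (t := c) hτ
  rcases le_or_gt (a*c + τ^2) 0 with h | h
  · exact h.trans (le_of_lt (mul_pos hp hq))
  · have hsq : (a*c + τ^2)^2 ≤ (Real.sqrt (a^2+τ^2) * Real.sqrt (c^2+τ^2))^2 := by
      rw [mul_pow, sq_s, sq_s]
      nlinarith [sq_nonneg (a - c), sq_nonneg (a*c), sq_nonneg τ]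
    nlinarith [mul_pos hp hq]

lemma key_ps_strict {τ a c : ℝ} (hτ : 0 < τ) (hac : a ≠ c) :
    a*c + τ^2 < Real.sqrt (a^2+τ^2) * Real.sqrt (c^2+τ^2) := by
  have hp := s_pos (t := a) hτ
  have hq := s_pos (t := c) hτ
  rcases le_or_gt (a*c + τ^2) 0 with h | h
  · exact h.trans_lt (mul_pos hp hq)
  · have h0 : a - c ≠ 0 := sub_ne_zero.2 hac
    have hac2 : 0 < (a - c)^2 := by
      have := pow_pos (abs_pos.2 h0) 2
      rwa [sq_abs] at this
    have hsq : (a*c + τ^2)^2 < (Real.sqrt (a^2+τ^2) * Real.sqrt (c^2+τ^2))^2 := by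
      rw [mul_pow, sq_s, sq_s]
      nlinarith [mul_pos (pow_pos hτ 2) hac2]
    exact lt_of_pow_lt_pow_left₀ 2 (le_of_lt (mul_pos hp hq)) hsq

/-- 1-Lipschitz bound for the smoothed abs: `(√(a²+τ²) − √(c²+τ²))² ≤ (a−c)²`. -/
lemma lip_s {τ a c : ℝ} (hτ : 0 < τ) :
    (Real.sqrt (a^2+τ^2) - Real.sqrt (c^2+τ^2))^2 ≤ (a - c)^2 := by
  have hp := s_pos (t := a) hτ
  have hq := s_pos (t := c) hτ
  have h1 := key_ps (a := a) (c := c) hτ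
  have h2 := sq_s (τ := τ) (t := a)
  have h3 := sq_s (τ := τ) (t := c)
  nlinarith

/-- Strict convexity of `t ↦ √(t²+τ²)`. -/
lemma sqrt_strict_convex {τ a c t : ℝ} (hτ : 0 < τ) (hac : a ≠ c) (ht0 : 0 < t) (ht1 : t < 1) :
    Real.sqrt (((1-t)*a + t*c)^2 + τ^2) <
      (1-t) * Real.sqrt (a^2+τ^2) + t * Real.sqrt (c^2+τ^2) := by
  have hp := s_pos (t := a) hτ
  have hq := s_pos (t := c) hτ
  have h2 := sq_s (τ := τ) (t := a)
  have h3 := sq_s (τ := τ) (t := c)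
  have hk := key_ps_strict (a := a) (c := c) hτ hac
  have hrhs : 0 < (1-t) * Real.sqrt (a^2+τ^2) + t * Real.sqrt (c^2+τ^2) := by
    have : 0 < 1 - t := by linarith
    positivity
  rw [Real.sqrt_lt' hrhs]
  nlinarith [mul_pos ht0 (show (0:ℝ) < 1 - t by linarith)]

/-- Convexity (non-strict). -/
lemma sqrt_convex_comb {τ a c t : ℝ} (hτ : 0 < τ) (ht0 : 0 ≤ t) (ht1 : t ≤ 1) :
    Real.sqrt (((1-t)*a + t*c)^2 + τ^2) ≤
      (1-t) * Real.sqrt (a^2+τ^2) + t * Real.sqrt (c^2+τ^2) := by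
  have hp := s_pos (t := a) hτ
  have hq := s_pos (t := c) hτ
  have h2 := sq_s (τ := τ) (t := a)
  have h3 := sq_s (τ := τ) (t := c)
  have hk := key_ps (a := a) (c := c) hτ
  have hrhs : 0 ≤ (1-t) * Real.sqrt (a^2+τ^2) + t * Real.sqrt (c^2+τ^2) := by
    have : 0 ≤ 1 - t := by linarith
    positivity
  have hx : ((1-t)*a + t*c)^2 + τ^2 ≤ ((1-t) * Real.sqrt (a^2+τ^2) + t * Real.sqrt (c^2+τ^2))^2 := by
    nlinarith [mul_nonneg ht0 (show (0:ℝ) ≤ 1-t by linarith)]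
  calc Real.sqrt (((1-t)*a + t*c)^2 + τ^2)
      ≤ Real.sqrt (((1-t) * Real.sqrt (a^2+τ^2) + t * Real.sqrt (c^2+τ^2))^2) := Real.sqrt_le_sqrt hx
    _ = _ := Real.sqrt_sq hrhs
open scoped BigOperators

section Quad
variable {m : ℕ}

lemma wnormSq_comb (M : Matrix (Fin m) (Fin m) ℝ) (a c : Fin m → ℝ) (t : ℝ) :
    wnormSq M ((1-t) • a + t • c)
      = (1-t) * wnormSq M a + t * wnormSq M c - t * (1-t) * wnormSq M (a - c) := by
  simp only [wnormSq, Matrix.mulVec_add, Matrix.mulVec_smul, Matrix.mulVec_sub,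
    dotProduct_add, dotProduct_smul, add_dotProduct,
    smul_dotProduct, dotProduct_sub, sub_dotProduct, smul_eq_mul]
  ring

lemma wnormSq_nonneg {M : Matrix (Fin m) (Fin m) ℝ} (hM : M.PosSemidef) (v : Fin m → ℝ) :
    0 ≤ wnormSq M v := by
  have := hM.dotProduct_mulVec_nonneg v
  simpa [wnormSq] using this

lemma wnormSq_pos {M : Matrix (Fin m) (Fin m) ℝ} (hM : M.PosDef) {v : Fin m → ℝ} (hv : v ≠ 0) :
    0 < wnormSq M v := by
  have := hM.dotProduct_mulVec_pos hv
  simpa [wnormSq] using this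

end Quad

lemma surr_self_term {τ c : ℝ} (hτ : 0 < τ) :
    (c^2+τ^2)/(2*Real.sqrt (c^2+τ^2)) + Real.sqrt (c^2+τ^2)/2 = Real.sqrt (c^2+τ^2) := by
  have hs := (s_pos (t := c) hτ).ne'
  have h2 := sq_s (τ := τ) (t := c)
  have hcomm : Real.sqrt (τ^2+c^2) = Real.sqrt (c^2+τ^2) := by rw [add_comm]
  field_simp
  linear_combination (-1 : ℝ) * h2

lemma surr_term_ge {τ a c : ℝ} (hτ : 0 < τ) :
    Real.sqrt (a^2+τ^2) ≤ (a^2+τ^2)/(2*Real.sqrt (c^2+τ^2)) + Real.sqrt (c^2+τ^2)/2 := by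
  have hs := s_pos (t := c) hτ
  have hp := s_pos (t := a) hτ
  have h2 := sq_s (τ := τ) (t := a)
  have h3 := sq_s (τ := τ) (t := c)
  have hre : (a^2+τ^2)/(2*Real.sqrt (c^2+τ^2)) + Real.sqrt (c^2+τ^2)/2
      = ((a^2+τ^2) + Real.sqrt (c^2+τ^2)^2)/(2*Real.sqrt (c^2+τ^2)) := by
    have hcomm : Real.sqrt (τ^2+c^2) = Real.sqrt (c^2+τ^2) := by rw [add_comm]
    field_simp
  rw [hre, le_div_iff₀ (by positivity)]
  nlinarith [sq_nonneg (Real.sqrt (a^2+τ^2) - Real.sqrt (c^2+τ^2))]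

lemma surr_term_gap {τ a c : ℝ} (hτ : 0 < τ) :
    (a^2+τ^2)/(2*Real.sqrt (c^2+τ^2)) + Real.sqrt (c^2+τ^2)/2 - Real.sqrt (a^2+τ^2)
      ≤ (a-c)^2/(2*τ) := by
  have hs := s_pos (t := c) hτ
  have hp := s_pos (t := a) hτ
  have h2 := sq_s (τ := τ) (t := a)
  have h3 := sq_s (τ := τ) (t := c)
  have hlip := lip_s (a := a) (c := c) hτ
  have hts := tau_le_s (t := c) hτ
  have hre : (a^2+τ^2)/(2*Real.sqrt (c^2+τ^2))
      = Real.sqrt (a^2+τ^2)^2/(2*Real.sqrt (c^2+τ^2)) := by rw [h2]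
  rw [hre]
  have hgap := gap_id (p := Real.sqrt (a^2+τ^2)) (s := Real.sqrt (c^2+τ^2)) hs.ne'
  rw [show Real.sqrt (a^2+τ^2)^2/(2*Real.sqrt (c^2+τ^2)) + Real.sqrt (c^2+τ^2)/2
      - Real.sqrt (a^2+τ^2)
      = (Real.sqrt (a^2+τ^2) - Real.sqrt (c^2+τ^2))^2/(2*Real.sqrt (c^2+τ^2)) from hgap]
  calc (Real.sqrt (a^2+τ^2) - Real.sqrt (c^2+τ^2))^2/(2*Real.sqrt (c^2+τ^2))
      ≤ (a-c)^2/(2*Real.sqrt (c^2+τ^2)) := by gcongr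
    _ ≤ (a-c)^2/(2*τ) := by
        apply div_le_div_of_nonneg_left (by positivity) (by positivity) (by linarith)

section Main

variable {m n : ℕ} (A : Matrix (Fin m) (Fin n) ℝ) (b : Fin m → ℝ)
  (R : Matrix (Fin m) (Fin m) ℝ) (Q : Matrix (Fin n) (Fin n) ℝ)
  (lx lξ τ : ℝ)

lemma phiSur_self (hτ : 0 < τ) (ζ x : Fin n → ℝ) :
    phiSur A b R Q lx lξ τ ζ x ζ = phi A b R Q lx lξ τ x ζ := by
  unfold phiSur phi
  congr 1
  congr 1
  apply Finset.sum_congr rfl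
  intro i _
  exact surr_self_term hτ

lemma phi_le_phiSur (hτ : 0 < τ) (ζ x ξ' : Fin n → ℝ) :
    phi A b R Q lx lξ τ x ξ' ≤ phiSur A b R Q lx lξ τ ζ x ξ' := by
  unfold phiSur phi
  have hsum : (∑ i, Real.sqrt ((ξ' i)^2+τ^2))
      ≤ ∑ i, (((ξ' i)^2+τ^2)/(2*Real.sqrt ((ζ i)^2+τ^2)) + Real.sqrt ((ζ i)^2+τ^2)/2) :=
    Finset.sum_le_sum fun i _ => surr_term_ge hτ
  nlinarith [mul_le_mul_of_nonneg_left hsum (sq_nonneg lξ)]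

lemma phiSur_gap (hτ : 0 < τ) (ζ x ξ' : Fin n → ℝ) :
    phiSur A b R Q lx lξ τ ζ x ξ' ≤ phi A b R Q lx lξ τ x ξ'
      + lξ^2 * ∑ i, (ξ' i - ζ i)^2/(2*τ) := by
  unfold phiSur phi
  have h : ∀ i : Fin n, ((ξ' i)^2+τ^2)/(2*Real.sqrt ((ζ i)^2+τ^2)) + Real.sqrt ((ζ i)^2+τ^2)/2
      ≤ Real.sqrt ((ξ' i)^2+τ^2) + (ξ' i - ζ i)^2/(2*τ) := fun i => by
    have := surr_term_gap (a := ξ' i) (c := ζ i) hτ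
    linarith
  have hsum : ∑ i, (((ξ' i)^2+τ^2)/(2*Real.sqrt ((ζ i)^2+τ^2)) + Real.sqrt ((ζ i)^2+τ^2)/2)
      ≤ ∑ i, (Real.sqrt ((ξ' i)^2+τ^2) + (ξ' i - ζ i)^2/(2*τ)) :=
    Finset.sum_le_sum fun i _ => h i
  simp only [Finset.sum_add_distrib] at hsum ⊢
  nlinarith [mul_le_mul_of_nonneg_left hsum (sq_nonneg lξ)]

end Main

section Convex

variable {m n : ℕ} (A : Matrix (Fin m) (Fin n) ℝ) (b : Fin m → ℝ)
  (R : Matrix (Fin m) (Fin m) ℝ) (Q : Matrix (Fin n) (Fin n) ℝ)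
  (lx lξ τ : ℝ)

lemma residual_comb (x₁ ξ₁ x₂ ξ₂ : Fin n → ℝ) (t : ℝ) :
    A.mulVec (Q.mulVec ((1-t) • x₁ + t • x₂)) + A.mulVec ((1-t) • ξ₁ + t • ξ₂) - b
      = (1-t) • (A.mulVec (Q.mulVec x₁) + A.mulVec ξ₁ - b)
        + t • (A.mulVec (Q.mulVec x₂) + A.mulVec ξ₂ - b) := by
  funext j
  simp [Matrix.mulVec_add, Matrix.mulVec_smul, Pi.smul_apply, smul_eq_mul]
  ring

lemma phi_strict_convex [NeZero n] (hR : R.PosDef) (hQ : Q.PosDef)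
    (hlx : 0 < lx) (hlξ : 0 < lξ) (hτ : 0 < τ)
    {x₁ ξ₁ x₂ ξ₂ : Fin n → ℝ} (hne : x₁ ≠ x₂ ∨ ξ₁ ≠ ξ₂) {t : ℝ} (ht0 : 0 < t) (ht1 : t < 1) :
    phi A b R Q lx lξ τ ((1-t) • x₁ + t • x₂) ((1-t) • ξ₁ + t • ξ₂)
      < (1-t) * phi A b R Q lx lξ τ x₁ ξ₁ + t * phi A b R Q lx lξ τ x₂ ξ₂ := by
  have ht0' : (0:ℝ) < 1 - t := by linarith
  have htt : 0 < t * (1-t) := mul_pos ht0 ht0'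
  unfold phi
  rw [residual_comb, wnormSq_comb, wnormSq_comb]
  have hRinv : (R⁻¹).PosSemidef := hR.inv.posSemidef
  have h1 : 0 ≤ wnormSq R⁻¹
      ((A.mulVec (Q.mulVec x₁) + A.mulVec ξ₁ - b) - (A.mulVec (Q.mulVec x₂) + A.mulVec ξ₂ - b)) :=
    wnormSq_nonneg hRinv _
  -- term 2
  have h2w : 0 ≤ wnormSq Q (x₁ - x₂) := wnormSq_nonneg hQ.posSemidef _
  -- term 3 pointwise
  have h3le : ∀ i : Fin n, Real.sqrt ((((1-t) • ξ₁ + t • ξ₂) i)^2 + τ^2)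
      ≤ (1-t) * Real.sqrt ((ξ₁ i)^2+τ^2) + t * Real.sqrt ((ξ₂ i)^2+τ^2) := by
    intro i
    have : ((1-t) • ξ₁ + t • ξ₂) i = (1-t) * ξ₁ i + t * ξ₂ i := by
      simp [Pi.smul_apply, smul_eq_mul]
    rw [this]
    exact sqrt_convex_comb hτ ht0.le ht1.le
  have hsum_le : ∑ i, Real.sqrt ((((1-t) • ξ₁ + t • ξ₂) i)^2 + τ^2)
      ≤ (1-t) * (∑ i, Real.sqrt ((ξ₁ i)^2+τ^2)) + t * (∑ i, Real.sqrt ((ξ₂ i)^2+τ^2)) := by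
    rw [Finset.mul_sum, Finset.mul_sum, ← Finset.sum_add_distrib]
    exact Finset.sum_le_sum fun i _ => h3le i
  rcases hne with hx | hξ
  · have h2s : 0 < wnormSq Q (x₁ - x₂) := wnormSq_pos hQ (sub_ne_zero.2 hx)
    nlinarith [mul_le_mul_of_nonneg_left hsum_le (sq_nonneg lξ), mul_pos htt h2s,
      mul_pos (mul_pos hlx hlx) (mul_pos htt h2s), sq_nonneg lx, mul_nonneg htt.le h1,
      mul_pos (pow_pos hlx 2) (mul_pos htt h2s)]
  · obtain ⟨i₀, hi₀⟩ : ∃ i, ξ₁ i ≠ ξ₂ i := by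
      by_contra h
      push_neg at h
      exact hξ (funext h)
    have hstrict : ∑ i, Real.sqrt ((((1-t) • ξ₁ + t • ξ₂) i)^2 + τ^2)
        < (1-t) * (∑ i, Real.sqrt ((ξ₁ i)^2+τ^2)) + t * (∑ i, Real.sqrt ((ξ₂ i)^2+τ^2)) := by
      rw [Finset.mul_sum, Finset.mul_sum, ← Finset.sum_add_distrib]
      apply Finset.sum_lt_sum (fun i _ => h3le i)
      refine ⟨i₀, Finset.mem_univ _, ?_⟩
      have : ((1-t) • ξ₁ + t • ξ₂) i₀ = (1-t) * ξ₁ i₀ + t * ξ₂ i₀ := by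
        simp [Pi.smul_apply, smul_eq_mul]
      rw [this]
      exact sqrt_strict_convex hτ hi₀ ht0 ht1
    nlinarith [mul_lt_mul_of_pos_left hstrict (pow_pos hlξ 2), mul_nonneg htt.le h1,
      mul_nonneg (sq_nonneg lx) (mul_nonneg htt.le h2w)]

end Convex

section Coercive

variable {n : ℕ}

lemma wnormSq_smul (M : Matrix (Fin n) (Fin n) ℝ) (s : ℝ) (v : Fin n → ℝ) :
    wnormSq M (s • v) = s^2 * wnormSq M v := by
  simp only [wnormSq, Matrix.mulVec_smul, dotProduct_smul, smul_dotProduct,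
    smul_eq_mul]
  ring

lemma wnormSq_continuous (M : Matrix (Fin n) (Fin n) ℝ) :
    Continuous fun v : Fin n → ℝ => wnormSq M v := by
  simp only [wnormSq, dotProduct, Matrix.mulVec]
  fun_prop

lemma quad_lb (hn : 0 < n) {Q : Matrix (Fin n) (Fin n) ℝ} (hQ : Q.PosDef) :
    ∃ c > 0, ∀ v : Fin n → ℝ, c * ‖v‖^2 ≤ wnormSq Q v := by
  haveI : Nonempty (Fin n) := ⟨⟨0, hn⟩⟩
  have hsph : IsCompact (Metric.sphere (0 : Fin n → ℝ) 1) := isCompact_sphere 0 1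
  have hne : (Metric.sphere (0 : Fin n → ℝ) 1).Nonempty := by
    refine ⟨fun _ => 1, ?_⟩
    simp [Metric.mem_sphere, dist_zero_right]
  obtain ⟨u, hu_mem, hu_min⟩ :=
    hsph.exists_isMinOn hne (wnormSq_continuous Q).continuousOn
  have hu_norm : ‖u‖ = 1 := by simpa [Metric.mem_sphere, dist_zero_right] using hu_mem
  have hu_ne : u ≠ 0 := fun h => by simp [h] at hu_norm
  refine ⟨wnormSq Q u, wnormSq_pos hQ hu_ne, fun v => ?_⟩
  rcases eq_or_ne v 0 with rfl | hv
  · simp [wnormSq]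
  · have hr : (0:ℝ) < ‖v‖ := norm_pos_iff.2 hv
    set u' : Fin n → ℝ := ‖v‖⁻¹ • v with hu'
    have hu'_norm : ‖u'‖ = 1 := by
      rw [hu', norm_smul, norm_inv, norm_norm, inv_mul_cancel₀ hr.ne']
    have hu'_mem : u' ∈ Metric.sphere (0 : Fin n → ℝ) 1 := by
      simp [Metric.mem_sphere, dist_zero_right, hu'_norm]
    have hval : wnormSq Q v = ‖v‖^2 * wnormSq Q u' := by
      rw [hu', wnormSq_smul]
      field_simp
    have hmin : wnormSq Q u ≤ wnormSq Q u' := hu_min hu'_mem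
    calc wnormSq Q u * ‖v‖^2 ≤ wnormSq Q u' * ‖v‖^2 := by nlinarith [sq_nonneg ‖v‖]
      _ = wnormSq Q v := by rw [hval]; ring

end Coercive

section Analytic

variable {m n : ℕ} (A : Matrix (Fin m) (Fin n) ℝ) (b : Fin m → ℝ)
  (R : Matrix (Fin m) (Fin m) ℝ) (Q : Matrix (Fin n) (Fin n) ℝ)
  (lx lξ τ : ℝ)

lemma residual_continuous :
    Continuous fun p : (Fin n → ℝ) × (Fin n → ℝ) =>
      A.mulVec (Q.mulVec p.1) + A.mulVec p.2 - b := by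
  unfold Matrix.mulVec dotProduct
  fun_prop

lemma phi_continuous :
    Continuous fun p : (Fin n → ℝ) × (Fin n → ℝ) => phi A b R Q lx lξ τ p.1 p.2 := by
  unfold phi
  refine Continuous.add (Continuous.add ?_ ?_) ?_
  · exact (wnormSq_continuous R⁻¹).comp (residual_continuous A b Q)
  · exact continuous_const.mul ((wnormSq_continuous Q).comp continuous_fst)
  · refine continuous_const.mul (continuous_finset_sum _ fun i _ => ?_)
    exact Real.continuous_sqrt.comp (by fun_prop)

lemma phiSur_continuous (hτ : 0 < τ) :
    Continuous fun q : (Fin n → ℝ) × ((Fin n → ℝ) × (Fin n → ℝ)) =>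
      phiSur A b R Q lx lξ τ q.1 q.2.1 q.2.2 := by
  unfold phiSur
  have hres : Continuous fun q : (Fin n → ℝ) × ((Fin n → ℝ) × (Fin n → ℝ)) =>
      A.mulVec (Q.mulVec q.2.1) + A.mulVec q.2.2 - b := by
    unfold Matrix.mulVec dotProduct
    fun_prop
  refine Continuous.add (Continuous.add ?_ ?_) ?_
  · exact (wnormSq_continuous R⁻¹).comp hres
  · exact continuous_const.mul ((wnormSq_continuous Q).comp (continuous_fst.comp continuous_snd))
  · refine continuous_const.mul (continuous_finset_sum _ fun i _ => ?_)
    refine Continuous.add (Continuous.div (by fun_prop) ?_ ?_) ?_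
    · exact continuous_const.mul (Real.continuous_sqrt.comp (by fun_prop))
    · intro q
      exact (mul_pos two_pos (s_pos (t := q.1 i) hτ)).ne'
    · exact (Real.continuous_sqrt.comp (by fun_prop)).div_const 2

lemma quadpart_differentiable :
    Differentiable ℝ (fun p : (Fin n → ℝ) × (Fin n → ℝ) =>
      wnormSq R⁻¹ (A.mulVec (Q.mulVec p.1) + A.mulVec p.2 - b) + lx^2 * wnormSq Q p.1) := by
  unfold wnormSq Matrix.mulVec dotProduct
  simp only [Pi.add_apply, Pi.sub_apply]
  fun_prop

lemma phi_differentiable (hτ : 0 < τ) :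
    Differentiable ℝ (fun p : (Fin n → ℝ) × (Fin n → ℝ) => phi A b R Q lx lξ τ p.1 p.2) := by
  unfold phi
  refine Differentiable.add (quadpart_differentiable A b R Q lx) ?_
  refine Differentiable.const_mul ?_ _
  refine Differentiable.fun_sum fun i _ => ?_
  intro p
  refine DifferentiableAt.sqrt (f := fun p : (Fin n → ℝ) × (Fin n → ℝ) => (p.2 i)^2 + τ^2)
    (by fun_prop) (by positivity)

lemma phiSur_differentiable (hτ : 0 < τ) (ζ : Fin n → ℝ) :
    Differentiable ℝ (fun p : (Fin n → ℝ) × (Fin n → ℝ) =>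
      phiSur A b R Q lx lξ τ ζ p.1 p.2) := by
  unfold phiSur
  refine Differentiable.add (quadpart_differentiable A b R Q lx) ?_
  refine Differentiable.const_mul ?_ _
  refine Differentiable.fun_sum fun i _ => ?_
  refine Differentiable.add ?_ (differentiable_const _)
  have hnum : Differentiable ℝ (fun p : (Fin n → ℝ) × (Fin n → ℝ) => (p.2 i)^2 + τ^2) := by
    fun_prop
  simp only [div_eq_mul_inv]
  exact hnum.mul_const _

end Analytic

section Unique

variable {m n : ℕ} (A : Matrix (Fin m) (Fin n) ℝ) (b : Fin m → ℝ)
  (R : Matrix (Fin m) (Fin m) ℝ) (Q : Matrix (Fin n) (Fin n) ℝ)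
  (lx lξ τ : ℝ)

lemma cluster_unique [NeZero n] (hR : R.PosDef) (hQ : Q.PosDef)
    (hlx : 0 < lx) (hlξ : 0 < lξ) (hτ : 0 < τ)
    {x1 ξ1 x2 ξ2 : Fin n → ℝ}
    (hmin1 : ∀ x' ξ', phiSur A b R Q lx lξ τ ξ1 x1 ξ1 ≤ phiSur A b R Q lx lξ τ ξ1 x' ξ')
    (heq : phi A b R Q lx lξ τ x2 ξ2 = phi A b R Q lx lξ τ x1 ξ1) :
    x1 = x2 ∧ ξ1 = ξ2 := by
  by_contra hne
  push_neg at hne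
  have hne' : x1 ≠ x2 ∨ ξ1 ≠ ξ2 := by
    by_cases h : x1 = x2
    · exact Or.inr (hne h)
    · exact Or.inl h
  set L := phi A b R Q lx lξ τ x1 ξ1 with hL
  set xm : Fin n → ℝ := (1-(1/2:ℝ)) • x1 + (1/2:ℝ) • x2 with hxm
  set ξm : Fin n → ℝ := (1-(1/2:ℝ)) • ξ1 + (1/2:ℝ) • ξ2 with hξm
  have hmid : phi A b R Q lx lξ τ xm ξm < L := by
    have := phi_strict_convex A b R Q lx lξ τ hR hQ hlx hlξ hτ hne'
      (t := (1/2:ℝ)) (by norm_num) (by norm_num)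
    rw [heq] at this
    calc phi A b R Q lx lξ τ xm ξm < (1-(1/2:ℝ)) * L + (1/2:ℝ) * L := this
      _ = L := by ring
  set h : ℝ := L - phi A b R Q lx lξ τ xm ξm with hh
  have hhpos : 0 < h := by simp only [hh]; linarith
  have hnem : x1 ≠ xm ∨ ξ1 ≠ ξm := by
    rcases hne' with hx | hξ
    · refine Or.inl fun hcon => hx ?_
      funext i
      have := congrFun hcon i
      simp only [hxm, Pi.add_apply, Pi.smul_apply, smul_eq_mul] at this
      linarith
    · refine Or.inr fun hcon => hξ ?_
      funext i
      have := congrFun hcon i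
      simp only [hξm, Pi.add_apply, Pi.smul_apply, smul_eq_mul] at this
      linarith
  set K : ℝ := ∑ i, (ξm i - ξ1 i)^2/(2*τ) with hK
  have hKnn : 0 ≤ K := Finset.sum_nonneg fun i _ => by positivity
  set t : ℝ := min (1/2) (h/(2*lξ^2*K+1)) with ht
  have hden : (0:ℝ) < 2*lξ^2*K+1 := by positivity
  have ht0 : 0 < t := lt_min (by norm_num) (by positivity)
  have ht_half : t ≤ 1/2 := min_le_left _ _
  have ht1 : t < 1 := lt_of_le_of_lt ht_half (by norm_num)
  have ht2 : t * (2*lξ^2*K+1) ≤ h := by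
    have := min_le_right (1/2:ℝ) (h/(2*lξ^2*K+1))
    calc t * (2*lξ^2*K+1) ≤ h/(2*lξ^2*K+1) * (2*lξ^2*K+1) := by
          apply mul_le_mul_of_nonneg_right _ hden.le
          exact this
      _ = h := by field_simp
  have hstrict : phi A b R Q lx lξ τ ((1-t) • x1 + t • xm) ((1-t) • ξ1 + t • ξm)
      < L - t*h := by
    have := phi_strict_convex A b R Q lx lξ τ hR hQ hlx hlξ hτ hnem ht0 ht1
    have heval : (1-t) * phi A b R Q lx lξ τ x1 ξ1 + t * phi A b R Q lx lξ τ xm ξm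
        = L - t*h := by rw [← hL, hh]; ring
    linarith
  have hgap := phiSur_gap A b R Q lx lξ τ hτ ξ1 ((1-t) • x1 + t • xm) ((1-t) • ξ1 + t • ξm)
  have hsum_eq : ∑ i, (((1-t) • ξ1 + t • ξm) i - ξ1 i)^2/(2*τ) = t^2 * K := by
    rw [hK, Finset.mul_sum]
    apply Finset.sum_congr rfl
    intro i _
    simp only [Pi.add_apply, Pi.smul_apply, smul_eq_mul]
    field_simp
    ring
  rw [hsum_eq] at hgap
  have hlow : L ≤ phiSur A b R Q lx lξ τ ξ1 ((1-t) • x1 + t • xm) ((1-t) • ξ1 + t • ξm) := by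
    calc L = phiSur A b R Q lx lξ τ ξ1 x1 ξ1 := (phiSur_self A b R Q lx lξ τ hτ ξ1 x1).symm
      _ ≤ _ := hmin1 _ _
  have htK : t * (lξ^2*K) ≤ h/2 := by nlinarith
  have hfin : lξ^2 * (t^2*K) ≤ t*(h/2) := by nlinarith
  nlinarith
end Unique

section Bounds

variable {m n : ℕ} (A : Matrix (Fin m) (Fin n) ℝ) (b : Fin m → ℝ)
  (R : Matrix (Fin m) (Fin m) ℝ) (Q : Matrix (Fin n) (Fin n) ℝ)
  (lx lξ τ : ℝ)

lemma phi_nonneg (hR : R.PosDef) (hQ : Q.PosDef) (x ξ : Fin n → ℝ) :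
    0 ≤ phi A b R Q lx lξ τ x ξ := by
  unfold phi
  have h1 := wnormSq_nonneg hR.inv.posSemidef (A.mulVec (Q.mulVec x) + A.mulVec ξ - b)
  have h2 := wnormSq_nonneg hQ.posSemidef x
  have h3 : 0 ≤ ∑ i, Real.sqrt ((ξ i)^2 + τ^2) :=
    Finset.sum_nonneg fun i _ => Real.sqrt_nonneg _
  have := mul_nonneg (sq_nonneg lx) h2
  have := mul_nonneg (sq_nonneg lξ) h3
  linarith

lemma phi_bounds (hR : R.PosDef) (hQ : Q.PosDef) (hlx : 0 < lx) (hlξ : 0 < lξ) (hτ : 0 < τ)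
    {c : ℝ} (hc : 0 < c) (hcq : ∀ v : Fin n → ℝ, c * ‖v‖^2 ≤ wnormSq Q v)
    {x ξ : Fin n → ℝ} {B : ℝ} (hB : phi A b R Q lx lξ τ x ξ ≤ B) :
    ‖x‖ ≤ Real.sqrt (B/(c*lx^2)) ∧ ‖ξ‖ ≤ B/lξ^2 := by
  have h1 := wnormSq_nonneg hR.inv.posSemidef (A.mulVec (Q.mulVec x) + A.mulVec ξ - b)
  have h3 : 0 ≤ ∑ i, Real.sqrt ((ξ i)^2 + τ^2) :=
    Finset.sum_nonneg fun i _ => Real.sqrt_nonneg _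
  have h2 := wnormSq_nonneg hQ.posSemidef x
  have hq : lx^2 * wnormSq Q x ≤ B := by
    unfold phi at hB
    nlinarith [mul_nonneg (sq_nonneg lξ) h3]
  have hxsq : ‖x‖^2 ≤ B/(c*lx^2) := by
    rw [le_div_iff₀ (by positivity)]
    nlinarith [hcq x]
  constructor
  · have : ‖x‖ = Real.sqrt (‖x‖^2) := (Real.sqrt_sq (norm_nonneg x)).symm
    rw [this]
    exact Real.sqrt_le_sqrt hxsq
  · have hsum : lξ^2 * ∑ i, Real.sqrt ((ξ i)^2 + τ^2) ≤ B := by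
      unfold phi at hB
      nlinarith [mul_nonneg (sq_nonneg lx) h2]
    have hBnn : 0 ≤ B/lξ^2 := by
      have := phi_nonneg A b R Q lx lξ τ hR hQ x ξ
      have hBnn' : 0 ≤ B := le_trans this hB
      positivity
    rw [pi_norm_le_iff_of_nonneg hBnn]
    intro i
    have hterm : Real.sqrt ((ξ i)^2 + τ^2) ≤ ∑ j, Real.sqrt ((ξ j)^2 + τ^2) :=
      Finset.single_le_sum (f := fun j => Real.sqrt ((ξ j)^2 + τ^2))
        (fun j _ => Real.sqrt_nonneg _) (Finset.mem_univ i)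
    have : |ξ i| ≤ B/lξ^2 := by
      have habs := abs_le_s (τ := τ) (t := ξ i)
      rw [le_div_iff₀ (by positivity)]
      nlinarith
    simpa [Real.norm_eq_abs] using this

end Bounds

set_option maxHeartbeats 2000000 in
open Filter in
/-- Theorem 3.2, second part: the MM iterates converge to a stationary point of `φ`. -/
theorem theorem_3_2_convergence_to_stationary_point (m n : ℕ) (hm : 0 < m) (hn : 0 < n)
    (A : Matrix (Fin m) (Fin n) ℝ) (b : Fin m → ℝ)
    (R : Matrix (Fin m) (Fin m) ℝ) (Q : Matrix (Fin n) (Fin n) ℝ)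
    (hR : R.PosDef) (hQ : Q.PosDef) (lx lξ τ : ℝ)
    (hlx : 0 < lx) (hlξ : 0 < lξ) (hτ : 0 < τ)
    (x ξ : ℕ → Fin n → ℝ)
    (hmin : ∀ k : ℕ, ∀ x' ξ' : Fin n → ℝ,
      phiSur A b R Q lx lξ τ (ξ k) (x (k + 1)) (ξ (k + 1)) ≤
        phiSur A b R Q lx lξ τ (ξ k) x' ξ') :
    ∃ xs ξs : Fin n → ℝ,
      Filter.Tendsto (fun k : ℕ => (x k, ξ k)) Filter.atTop (nhds (xs, ξs)) ∧
      fderiv ℝ (fun p : (Fin n → ℝ) × (Fin n → ℝ) => phi A b R Q lx lξ τ p.1 p.2)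
        (xs, ξs) = 0 := by
  haveI : NeZero n := ⟨hn.ne'⟩
  -- descent
  have hdesc : ∀ k, phi A b R Q lx lξ τ (x (k+1)) (ξ (k+1)) ≤ phi A b R Q lx lξ τ (x k) (ξ k) := by
    intro k
    calc phi A b R Q lx lξ τ (x (k+1)) (ξ (k+1))
        ≤ phiSur A b R Q lx lξ τ (ξ k) (x (k+1)) (ξ (k+1)) :=
          phi_le_phiSur A b R Q lx lξ τ hτ _ _ _
      _ ≤ phiSur A b R Q lx lξ τ (ξ k) (x k) (ξ k) := hmin k _ _
      _ = phi A b R Q lx lξ τ (x k) (ξ k) := phiSur_self A b R Q lx lξ τ hτ _ _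
  have hanti : Antitone fun k => phi A b R Q lx lξ τ (x k) (ξ k) :=
    antitone_nat_of_succ_le hdesc
  have hbdd : BddBelow (Set.range fun k => phi A b R Q lx lξ τ (x k) (ξ k)) := by
    refine ⟨0, ?_⟩
    rintro v ⟨k, rfl⟩
    exact phi_nonneg A b R Q lx lξ τ hR hQ _ _
  set L : ℝ := ⨅ k, phi A b R Q lx lξ τ (x k) (ξ k) with hLdef
  have hLten : Tendsto (fun k => phi A b R Q lx lξ τ (x k) (ξ k)) atTop (nhds L) :=
    tendsto_atTop_ciInf hanti hbdd
  -- boundedness of the iterates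
  obtain ⟨c, hc, hcq⟩ := quad_lb hn hQ
  set B : ℝ := phi A b R Q lx lξ τ (x 0) (ξ 0) with hBdef
  have hB : ∀ k, phi A b R Q lx lξ τ (x k) (ξ k) ≤ B := fun k => hanti (Nat.zero_le k)
  set ρ : ℝ := max (Real.sqrt (B/(c*lx^2))) (B/lξ^2) with hρdef
  have hball : ∀ k, (x k, ξ k) ∈ Metric.closedBall (0 : (Fin n → ℝ) × (Fin n → ℝ)) ρ := by
    intro k
    obtain ⟨hx1, hx2⟩ := phi_bounds A b R Q lx lξ τ hR hQ hlx hlξ hτ hc hcq (hB k)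
    rw [Metric.mem_closedBall, dist_zero_right, Prod.norm_def]
    exact max_le_max hx1 hx2
  have hcomp : IsCompact (Metric.closedBall (0 : (Fin n → ℝ) × (Fin n → ℝ)) ρ) :=
    isCompact_closedBall _ _
  have hΦcont := phi_continuous A b R Q lx lξ τ
  have hScont := phiSur_continuous A b R Q lx lξ τ hτ
  -- every cluster point attains value L and minimizes its own surrogate
  have key : ∀ σ : ℕ → ℕ, Tendsto σ atTop atTop →
      ∀ zl : (Fin n → ℝ) × (Fin n → ℝ),
      Tendsto (fun j => (x (σ j), ξ (σ j))) atTop (nhds zl) →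
      phi A b R Q lx lξ τ zl.1 zl.2 = L ∧
      ∀ x' ξ', phiSur A b R Q lx lξ τ zl.2 zl.1 zl.2 ≤ phiSur A b R Q lx lξ τ zl.2 x' ξ' := by
    intro σ hσ zl hconv
    have hval : phi A b R Q lx lξ τ zl.1 zl.2 = L := by
      have h2 : Tendsto (fun j => phi A b R Q lx lξ τ (x (σ j)) (ξ (σ j))) atTop (nhds L) := by
        have := hLten.comp hσ
        simpa [Function.comp_def] using this
      have h1 : Tendsto (fun j => phi A b R Q lx lξ τ (x (σ j)) (ξ (σ j))) atTop
          (nhds (phi A b R Q lx lξ τ zl.1 zl.2)) := by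
        have := (hΦcont.tendsto zl).comp hconv
        simpa [Function.comp_def] using this
      exact tendsto_nhds_unique h1 h2
    refine ⟨hval, ?_⟩
    -- successor subsequence
    have hwball : ∀ j, (x (σ j + 1), ξ (σ j + 1)) ∈
        Metric.closedBall (0 : (Fin n → ℝ) × (Fin n → ℝ)) ρ := fun j => hball _
    obtain ⟨z', -, ρ', hρ'mono, hconv'⟩ := hcomp.tendsto_subseq hwball
    have hidx : Tendsto (fun j => σ (ρ' j) + 1) atTop atTop :=
      tendsto_atTop_mono (fun j => Nat.le_succ _) (hσ.comp hρ'mono.tendsto_atTop)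
    have hz'val : phi A b R Q lx lξ τ z'.1 z'.2 = L := by
      have h2 : Tendsto (fun j => phi A b R Q lx lξ τ (x (σ (ρ' j) + 1)) (ξ (σ (ρ' j) + 1)))
          atTop (nhds L) := by
        have := hLten.comp hidx
        simpa [Function.comp_def] using this
      have h1 : Tendsto (fun j => phi A b R Q lx lξ τ (x (σ (ρ' j) + 1)) (ξ (σ (ρ' j) + 1)))
          atTop (nhds (phi A b R Q lx lξ τ z'.1 z'.2)) := by
        have := (hΦcont.tendsto z').comp hconv'
        simpa [Function.comp_def] using this
      exact tendsto_nhds_unique h1 h2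
    have hξlim : Tendsto (fun j => ξ (σ (ρ' j))) atTop (nhds zl.2) := by
      have := ((continuous_snd.tendsto zl).comp hconv).comp hρ'mono.tendsto_atTop
      simpa [Function.comp_def] using this
    have hmin' : ∀ x' ξ', phiSur A b R Q lx lξ τ zl.2 z'.1 z'.2
        ≤ phiSur A b R Q lx lξ τ zl.2 x' ξ' := by
      intro x' ξ'
      have hLHS : Tendsto (fun j => phiSur A b R Q lx lξ τ (ξ (σ (ρ' j)))
          (x (σ (ρ' j) + 1)) (ξ (σ (ρ' j) + 1))) atTop
          (nhds (phiSur A b R Q lx lξ τ zl.2 z'.1 z'.2)) := by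
        have := (hScont.tendsto (zl.2, z')).comp (hξlim.prodMk_nhds hconv')
        simpa [Function.comp_def] using this
      have hRHS : Tendsto (fun j => phiSur A b R Q lx lξ τ (ξ (σ (ρ' j))) x' ξ') atTop
          (nhds (phiSur A b R Q lx lξ τ zl.2 x' ξ')) := by
        have := (hScont.tendsto (zl.2, (x', ξ'))).comp
          (hξlim.prodMk_nhds (tendsto_const_nhds (x := (x', ξ'))))
        simpa [Function.comp_def] using this
      exact le_of_tendsto_of_tendsto' hLHS hRHS fun j => hmin (σ (ρ' j)) x' ξ'
    intro x' ξ'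
    have h1 : phiSur A b R Q lx lξ τ zl.2 zl.1 zl.2 = L := by
      rw [phiSur_self A b R Q lx lξ τ hτ]
      exact hval
    have h2 : L ≤ phiSur A b R Q lx lξ τ zl.2 z'.1 z'.2 := by
      rw [← hz'val]
      exact phi_le_phiSur A b R Q lx lξ τ hτ _ _ _
    rw [h1]
    exact le_trans h2 (hmin' x' ξ')
  -- a cluster point exists
  obtain ⟨zbar, -, σ₀, hσ₀mono, hconv₀⟩ := hcomp.tendsto_subseq hball
  obtain ⟨hvalbar, hminbar⟩ := key σ₀ hσ₀mono.tendsto_atTop zbar hconv₀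
  refine ⟨zbar.1, zbar.2, ?_, ?_⟩
  · -- full-sequence convergence
    rw [show (zbar.1, zbar.2) = zbar from rfl]
    apply tendsto_of_subseq_tendsto
    intro ns hns
    have hnsball : ∀ j, (x (ns j), ξ (ns j)) ∈
        Metric.closedBall (0 : (Fin n → ℝ) × (Fin n → ℝ)) ρ := fun j => hball _
    obtain ⟨zt, -, ms, hmsmono, hconvt⟩ := hcomp.tendsto_subseq hnsball
    obtain ⟨hvalt, -⟩ := key (ns ∘ ms) (hns.comp hmsmono.tendsto_atTop) zt hconvt
    have heqz : zbar = zt := by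
      have := cluster_unique A b R Q lx lξ τ hR hQ hlx hlξ hτ
        (x1 := zbar.1) (ξ1 := zbar.2) (x2 := zt.1) (ξ2 := zt.2) hminbar
        (by rw [hvalt, hvalbar])
      exact Prod.ext this.1 this.2
    exact ⟨ms, by rw [heqz]; exact hconvt⟩
  · -- stationarity
    set G : (Fin n → ℝ) × (Fin n → ℝ) → ℝ :=
      fun p => phiSur A b R Q lx lξ τ zbar.2 p.1 p.2 with hGdef
    set F : (Fin n → ℝ) × (Fin n → ℝ) → ℝ :=
      fun p => phi A b R Q lx lξ τ p.1 p.2 with hFdef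
    have hFdiff : Differentiable ℝ F := phi_differentiable A b R Q lx lξ τ hτ
    have hGdiff : Differentiable ℝ G := phiSur_differentiable A b R Q lx lξ τ hτ _
    have hFleG : ∀ p, F p ≤ G p := fun p => phi_le_phiSur A b R Q lx lξ τ hτ _ _ _
    have hFGeq : F (zbar.1, zbar.2) = G (zbar.1, zbar.2) :=
      (phiSur_self A b R Q lx lξ τ hτ zbar.2 zbar.1).symm
    have hGmin : IsLocalMin G (zbar.1, zbar.2) :=
      Filter.Eventually.of_forall fun p => hminbar p.1 p.2
    have hGz : fderiv ℝ G (zbar.1, zbar.2) = 0 := hGmin.fderiv_eq_zero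
    have hHmax : IsLocalMax (fun p => F p - G p) (zbar.1, zbar.2) :=
      Filter.Eventually.of_forall fun p => by
        have := hFleG p
        simp only [hFGeq]
        linarith [hFleG (zbar.1, zbar.2)]
    have hHz : fderiv ℝ (fun p => F p - G p) (zbar.1, zbar.2) = 0 := hHmax.fderiv_eq_zero
    have hsplit : F = fun p => G p + (F p - G p) := by
      funext p; ring
    have : fderiv ℝ F (zbar.1, zbar.2) = 0 := by
      rw [hsplit, fderiv_fun_add (g := fun p => F p - G p) (hGdiff _) ((hFdiff _).sub (hGdiff _)), hGz, hHz]
      simp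
    exact this
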